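/- arXiv:math/0502375 — 3 statements merged into one kernel-verified Lean document; each statement's English description precedes it below -/
import Mathlib

section
/- Let X be a centered Gaussian random vector in a separable Hilbert space H with Karhunen–Loève expansion X = Σ_{j≥1} λ_j^{1/2} Z_j u_j, where λ_1 ≥ λ_2 ≥ … > 0, {u_j} is orthonormal in H, and Z_j are i.i.d. N(0,1). Fix n, m, l, n_1, …, n_m ∈ ℕ with ∏_{j=1}^m n_j ≤ n, set Z^{(j)} := (Z_{(j−1)l+1}, …, Z_{jl}), let α_j ⊂ ℝ^l be an L²-optimal n_j-quantizer for N(0,I_l) and Ẑ^{(j)} the corresponding Voronoi quantization of Z^{(j)}, and define X̂^n := Σ_{j=1}^m Σ_{k=1}^l λ_{(j−1)l+k}^{1/2} (Ẑ^{(j)})_k u_{(j−1)l+k}. Then E‖X − X̂^n‖² ≤ Σ_{j=1}^m λ_{(j−1)l+1} e_{n_j}(N(0,I_l))² + Σ_{j ≥ ml+1} λ_j; moreover equality holds if l = 1. -/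
open MeasureTheory ProbabilityTheory Filter Real
open scoped RealInnerProductSpace NNReal

/-- The standard Gaussian distribution `N(0, I_l)` on `ℝ^l`. -/
noncomputable def stdGaussianPi (l : ℕ) : MeasureTheory.Measure (Fin l → ℝ) :=
  MeasureTheory.Measure.pi fun _ => ProbabilityTheory.gaussianReal 0 1

/-- The minimal `k`-th `L²`-quantization error of `N(0, I_l)` with respect to the
Euclidean norm on `ℝ^l`. -/
noncomputable def quantErrStdGaussian (l k : ℕ) : ℝ :=
  sInf { r : ℝ | ∃ α : Finset (Fin l → ℝ), α.Nonempty ∧ α.card ≤ k ∧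
    r = (∫ x, sInf ((fun a => ∑ i, (x i - a i) ^ 2) '' (α : Set (Fin l → ℝ)))
          ∂stdGaussianPi l) ^ (1/2 : ℝ) }

/-!
By Parseval, `‖X - X̂ⁿ‖² = ∑ᵢ λᵢ (Zᵢ - Ẑᵢ)²`, where `Ẑᵢ` is the quantized coordinate for
`i < m l` and `0` beyond, so taking expectations termwise the tail contributes
`∑_{i ≥ m l} λᵢ E Zᵢ² = ∑_{i ≥ m l} λᵢ`. Inside the `j`-th block the eigenvalues are at most the
first one, and the expected squared errors of the block add up to `E min_{a ∈ αⱼ} |Z⁽ʲ⁾ - a|²`,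
which is `e_{nⱼ}(N(0, I_l))²` because independence makes `Z⁽ʲ⁾` standard Gaussian on `ℝ^l`.
For `l = 1` each block has a single eigenvalue, so the bound is attained.
-/

section Gaussian

variable {Ω : Type*} [MeasurableSpace Ω] {P : Measure Ω} {Z : Ω → ℝ}

lemma integral_sq_gaussianReal (v : ℝ≥0) : ∫ x, x ^ 2 ∂gaussianReal 0 v = v := by
  simpa [variance_eq_integral measurable_id'.aemeasurable] using
    variance_fun_id_gaussianReal (μ := 0) (v := v)

lemma ProbabilityTheory.HasLaw.memLp_gaussianReal {μ : ℝ} {v : ℝ≥0}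
    (hZ : HasLaw Z (gaussianReal μ v) P) (p : ℝ≥0) : MemLp Z p P :=
  (memLp_map_measure_iff aestronglyMeasurable_id hZ.aemeasurable).1
    (hZ.map_eq ▸ memLp_id_gaussianReal p)

lemma ProbabilityTheory.HasLaw.integral_sq_gaussianReal {v : ℝ≥0}
    (hZ : HasLaw Z (gaussianReal 0 v) P) : ∫ ω, Z ω ^ 2 ∂P = v :=
  (hZ.integral_comp (f := fun x => x ^ 2) (by fun_prop)).trans (_root_.integral_sq_gaussianReal v)

end Gaussian

lemma memLp_of_forall_mem_finset {Ω E : Type*} [MeasurableSpace Ω] [NormedAddCommGroup E]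
    {P : Measure Ω} [IsFiniteMeasure P] {p : ENNReal} {f : Ω → E} {s : Finset E}
    (hf : AEStronglyMeasurable f P) (hs : ∀ ω, f ω ∈ s) : MemLp f p P :=
  MemLp.of_bound hf (s.sup (‖·‖₊) : ℝ≥0) <| ae_of_all _ fun ω =>
    NNReal.coe_le_coe.2 (Finset.le_sup (f := (‖·‖₊)) (hs ω))

lemma Orthonormal.hasSum_sq_of_hasSum {ι H : Type*} [NormedAddCommGroup H]
    [InnerProductSpace ℝ H] {u : ι → H} (hu : Orthonormal ℝ u) {a : ι → ℝ} {x : H}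
    (h : HasSum (fun i => a i • u i) x) : HasSum (fun i => a i ^ 2) (‖x‖ ^ 2) := by
  refine (((continuous_norm.pow 2).tendsto x).comp h).congr fun s => ?_
  simp only [Function.comp_apply, Pi.pow_apply]
  rw [← real_inner_self_eq_norm_sq, hu.inner_sum]
  simp [pow_two]

lemma integral_norm_sub_sq_eq_tsum {ι Ω H : Type*} [Countable ι] [MeasurableSpace Ω]
    [NormedAddCommGroup H] [InnerProductSpace ℝ H] {P : Measure Ω} {u : ι → H}
    (hu : Orthonormal ℝ u) {a b : ι → Ω → ℝ} {X Y : Ω → H}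
    (hX : ∀ᵐ ω ∂P, HasSum (fun i => a i ω • u i) (X ω))
    (hY : ∀ᵐ ω ∂P, HasSum (fun i => b i ω • u i) (Y ω))
    (hint : ∀ i, Integrable (fun ω => (a i ω - b i ω) ^ 2) P)
    (hsum : Summable fun i => ∫ ω, (a i ω - b i ω) ^ 2 ∂P) :
    ∫ ω, ‖X ω - Y ω‖ ^ 2 ∂P = ∑' i, ∫ ω, (a i ω - b i ω) ^ 2 ∂P := by
  have hnorm : ∀ i ω, ‖(a i ω - b i ω) ^ 2‖ = (a i ω - b i ω) ^ 2 :=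
    fun i ω => Real.norm_of_nonneg (sq_nonneg _)
  rw [integral_tsum_of_summable_integral_norm hint (by simpa only [hnorm] using hsum)]
  refine integral_congr_ae ?_
  filter_upwards [hX, hY] with ω hXω hYω
  exact (hu.hasSum_sq_of_hasSum (by simpa only [sub_smul] using hXω.sub hYω)).tsum_eq.symm

section Blocks

variable {m l : ℕ}

lemma Finset.sum_range_mul_eq_sum_sum {M : Type*} [AddCommMonoid M] (f : ℕ → M) :
    ∑ i ∈ Finset.range (m * l), f i = ∑ j : Fin m, ∑ k : Fin l, f (j * l + k) := by
  induction m with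
  | zero => simp
  | succ m ih =>
    rw [Nat.succ_mul, Finset.sum_range_add, ih, Fin.sum_univ_castSucc]
    simp [Finset.sum_range]

lemma hasSum_sum_sum_of_eq_zero_of_mul_le {M : Type*} [AddCommMonoid M] [TopologicalSpace M]
    {f : ℕ → M} (hf : ∀ i, m * l ≤ i → f i = 0) :
    HasSum f (∑ j : Fin m, ∑ k : Fin l, f (j * l + k)) := by
  rw [← Finset.sum_range_mul_eq_sum_sum]
  exact hasSum_sum_of_ne_finset_zero fun i hi => hf i (by simpa using hi)

def blockConcat {M : Type*} [Zero M] (v : Fin m → Fin l → M) (i : ℕ) : M :=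
  if h : i < m * l then
    v ⟨i / l, Nat.div_lt_of_lt_mul (by rwa [mul_comm])⟩
      ⟨i % l, Nat.mod_lt _ (Nat.pos_of_lt_mul_left h)⟩
  else 0

lemma blockConcat_mul_add {M : Type*} [Zero M] (v : Fin m → Fin l → M) (j : Fin m) (k : Fin l) :
    blockConcat v (j * l + k) = v j k := by
  have hk : (k : ℕ) < l := k.isLt
  have hlt : (j : ℕ) * l + k < m * l := by nlinarith [j.isLt]
  have hdiv : ((j : ℕ) * l + k) / l = j := by
    rw [add_comm, Nat.add_mul_div_right _ _ (by omega), Nat.div_eq_of_lt hk, zero_add]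
  have hmod : ((j : ℕ) * l + k) % l = k := by simp [Nat.mod_eq_of_lt hk]
  simp only [blockConcat, dif_pos hlt, hdiv, hmod]

lemma blockConcat_of_le {M : Type*} [Zero M] (v : Fin m → Fin l → M) {i : ℕ} (hi : m * l ≤ i) :
    blockConcat v i = 0 :=
  dif_neg (not_lt.2 hi)

lemma memLp_blockConcat {Ω : Type*} [MeasurableSpace Ω] {P : Measure Ω} {p : ENNReal}
    {q : Fin m → Ω → Fin l → ℝ} (hq : ∀ j k, MemLp (fun ω => q j ω k) p P) (i : ℕ) :
    MemLp (fun ω => blockConcat (fun j => q j ω) i) p P := by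
  unfold blockConcat
  split_ifs
  exacts [hq _ _, MemLp.zero']

end Blocks

section Quantization

variable {l : ℕ}

/-- Equal to `0` when `α = ∅`, as `sInf ∅ = 0`. -/
noncomputable def minSqDist (α : Finset (Fin l → ℝ)) (x : Fin l → ℝ) : ℝ :=
  sInf ((fun a => ∑ i, (x i - a i) ^ 2) '' (α : Set (Fin l → ℝ)))

lemma continuous_minSqDist (α : Finset (Fin l → ℝ)) : Continuous (minSqDist α) := by
  unfold minSqDist
  rcases α.eq_empty_or_nonempty with rfl | hα
  · simp only [Finset.coe_empty, Set.image_empty, Real.sInf_empty]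
    exact continuous_const
  · simp_rw [← Finset.inf'_eq_csInf_image _ hα]
    exact Continuous.finset_inf'_apply hα fun a _ => by fun_prop

lemma sum_integral_sq_sub_eq_quantErrStdGaussian_sq {Ω : Type*} [MeasurableSpace Ω]
    {P : Measure Ω} {n : ℕ} {α : Finset (Fin l → ℝ)}
    (hopt : (∫ x, minSqDist α x ∂stdGaussianPi l) ^ (1/2 : ℝ) = quantErrStdGaussian l n)
    {V q : Ω → Fin l → ℝ} (hV : HasLaw V (stdGaussianPi l) P)
    (hint : ∀ k, Integrable (fun ω => (V ω k - q ω k) ^ 2) P)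
    (hq : ∀ ω, ∑ k, (V ω k - q ω k) ^ 2 = minSqDist α (V ω)) :
    ∑ k, ∫ ω, (V ω k - q ω k) ^ 2 ∂P = quantErrStdGaussian l n ^ 2 := by
  have hnonneg : 0 ≤ ∫ x, minSqDist α x ∂stdGaussianPi l :=
    integral_nonneg fun x => Real.sInf_nonneg <| by
      rintro _ ⟨a, -, rfl⟩
      positivity
  rw [← integral_finsetSum _ fun k _ => hint k, ← hopt, ← Real.rpow_natCast,
    ← Real.rpow_mul hnonneg]
  simp_rw [hq]
  norm_num
  exact hV.integral_comp (continuous_minSqDist α).aestronglyMeasurable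

end Quantization

theorem integral_norm_sub_sq_eq_sum_blocks_add_tsum {H Ω : Type*} [NormedAddCommGroup H]
    [InnerProductSpace ℝ H] [MeasurableSpace Ω] {P : Measure Ω} {lam : ℕ → ℝ} {u : ℕ → H}
    {Z : ℕ → Ω → ℝ} {X Xhat : Ω → H} {m l : ℕ} {q : Fin m → Ω → Fin l → ℝ}
    (hlam : ∀ i, 0 ≤ lam i) (hlam_sum : Summable lam) (hu : Orthonormal ℝ u)
    (hZ : ∀ i, HasLaw (Z i) (gaussianReal 0 1) P)
    (hX : ∀ᵐ ω ∂P, HasSum (fun i => (√(lam i) * Z i ω) • u i) (X ω))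
    (hq : ∀ j k, MemLp (fun ω => q j ω k) 2 P)
    (hXhat : ∀ ω, Xhat ω = ∑ j : Fin m, ∑ k : Fin l,
      (√(lam (j * l + k)) * q j ω k) • u (j * l + k)) :
    ∫ ω, ‖X ω - Xhat ω‖ ^ 2 ∂P = ∑ j : Fin m, ∑ k : Fin l,
        lam (j * l + k) * ∫ ω, (Z (j * l + k) ω - q j ω k) ^ 2 ∂P + ∑' i, lam (m * l + i) := by
  set r : ℕ → Ω → ℝ := fun i ω => blockConcat (fun j => q j ω) i
  set D : ℕ → ℝ := fun i => ∫ ω, (Z i ω - r i ω) ^ 2 ∂P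
  have hXhat' : ∀ ω, HasSum (fun i => (√(lam i) * r i ω) • u i) (Xhat ω) := fun ω => by
    have := hasSum_sum_sum_of_eq_zero_of_mul_le (m := m) (l := l)
      (f := fun i => (√(lam i) * r i ω) • u i) fun i hi => by
        simp only [r, blockConcat_of_le _ hi, mul_zero, zero_smul]
    simpa only [hXhat, r, blockConcat_mul_add] using this
  have hsq : ∀ i ω, (√(lam i) * Z i ω - √(lam i) * r i ω) ^ 2 = lam i * (Z i ω - r i ω) ^ 2 :=
    fun i ω => by rw [← mul_sub, mul_pow, Real.sq_sqrt (hlam i)]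
  have hint : ∀ i, Integrable (fun ω => (Z i ω - r i ω) ^ 2) P := fun i =>
    ((hZ i).memLp_gaussianReal 2 |>.sub (memLp_blockConcat hq i)).integrable_sq
  have hD_tail : ∀ i, D (i + m * l) = 1 := fun i => by
    simpa only [D, r, blockConcat_of_le _ (Nat.le_add_left _ _), sub_zero, NNReal.coe_one]
      using (hZ _).integral_sq_gaussianReal
  have hsum : Summable fun i => lam i * D i :=
    (summable_nat_add_iff (m * l)).1 <| by
      simpa only [hD_tail, mul_one] using (summable_nat_add_iff (m * l)).2 hlam_sum
  calc ∫ ω, ‖X ω - Xhat ω‖ ^ 2 ∂P = ∑' i, lam i * D i := by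
        rw [integral_norm_sub_sq_eq_tsum hu hX (ae_of_all _ hXhat')
          (fun i => by simpa only [hsq] using (hint i).const_mul (lam i))
          (by simpa only [hsq, integral_const_mul] using hsum)]
        simp only [hsq, integral_const_mul, D]
    _ = _ := by
        rw [← hsum.sum_add_tsum_nat_add (m * l), Finset.sum_range_mul_eq_sum_sum]
        simp only [hD_tail, mul_one]
        simp only [add_comm _ (m * l), D, r, blockConcat_mul_add]

theorem block_quantization_error_bound_general
    {H : Type*} [NormedAddCommGroup H] [InnerProductSpace ℝ H]
    {Ω : Type*} [MeasurableSpace Ω] (P : Measure Ω) [IsProbabilityMeasure P]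
    -- Karhunen–Loève data: `λ_1 ≥ λ_2 ≥ … > 0`, `u` orthonormal, `Z_j` i.i.d. `N(0,1)`
    (lam : ℕ → ℝ) (hlam_pos : ∀ j, 0 < lam j) (hlam_anti : Antitone lam)
    (hlam_sum : Summable lam)
    (u : ℕ → H) (hu : Orthonormal ℝ u)
    (Z : ℕ → Ω → ℝ) (hZmeas : ∀ j, Measurable (Z j))
    (hZlaw : ∀ j, Measure.map (Z j) P = gaussianReal 0 1)
    (hZindep : iIndepFun Z P)
    -- `X = Σ_j λ_j^{1/2} Z_j u_j`
    (X : Ω → H)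
    (hX : ∀ᵐ ω ∂P, HasSum (fun j => (Real.sqrt (lam j) * Z j ω) • u j) (X ω))
    (m l : ℕ) (nn : Fin m → ℕ)
    -- `α j` is an `L²`-optimal `n_j`-quantizer of `N(0,I_l)`
    (α : Fin m → Finset (Fin l → ℝ))
    (hopt : ∀ j,
      (∫ x, sInf ((fun a => ∑ i, (x i - a i) ^ 2) '' ((α j : Set (Fin l → ℝ))))
          ∂stdGaussianPi l) ^ (1/2 : ℝ) = quantErrStdGaussian l (nn j))
    -- `q j` is a Voronoi (nearest-neighbour) quantization of the block `Z^{(j)}` by `α j`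
    (q : Fin m → Ω → Fin l → ℝ) (hqmeas : ∀ j, Measurable (q j))
    (hq : ∀ j ω, q j ω ∈ α j ∧
      (∑ i : Fin l, (Z ((j : ℕ) * l + (i : ℕ)) ω - q j ω i) ^ 2)
        = sInf ((fun a => ∑ i : Fin l, (Z ((j : ℕ) * l + (i : ℕ)) ω - a i) ^ 2) ''
            ((α j : Set (Fin l → ℝ)))))
    -- the block quantization `X̂ⁿ`
    (Xhat : Ω → H)
    (hXhat : ∀ ω, Xhat ω = ∑ j : Fin m, ∑ k : Fin l,
        (Real.sqrt (lam ((j : ℕ) * l + (k : ℕ))) * q j ω k) • u ((j : ℕ) * l + (k : ℕ))) :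
    (∫ ω, ‖X ω - Xhat ω‖ ^ 2 ∂P)
        ≤ (∑ j : Fin m, lam ((j : ℕ) * l) * quantErrStdGaussian l (nn j) ^ 2)
          + ∑' i : ℕ, lam (m * l + i)
    ∧ (l = 1 →
      (∫ ω, ‖X ω - Xhat ω‖ ^ 2 ∂P)
        = (∑ j : Fin m, lam ((j : ℕ) * l) * quantErrStdGaussian l (nn j) ^ 2)
          + ∑' i : ℕ, lam (m * l + i)) := by
  have hZ : ∀ i, HasLaw (Z i) (gaussianReal 0 1) P := fun i => ⟨(hZmeas i).aemeasurable, hZlaw i⟩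
  have hqL2 : ∀ j k, MemLp (fun ω => q j ω k) 2 P := fun j k =>
    memLp_of_forall_mem_finset (by fun_prop) fun ω => Finset.mem_image_of_mem (· k) (hq j ω).1
  have hblock : ∀ j : Fin m, ∑ k : Fin l, ∫ ω, (Z (j * l + k) ω - q j ω k) ^ 2 ∂P
      = quantErrStdGaussian l (nn j) ^ 2 := fun j =>
    sum_integral_sq_sub_eq_quantErrStdGaussian_sq (hopt j)
      ((hZindep.precomp fun _ _ h => Fin.ext (Nat.add_left_cancel h)).hasLaw_pi fun _ => hZ _)
      (fun k => ((hZ _).memLp_gaussianReal 2 |>.sub (hqL2 j k)).integrable_sq) fun ω => (hq j ω).2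
  have herr := integral_norm_sub_sq_eq_sum_blocks_add_tsum (fun i => (hlam_pos i).le) hlam_sum hu hZ hX
    hqL2 hXhat
  refine ⟨?_, fun hl => ?_⟩
  · rw [herr]
    gcongr with j
    calc ∑ k : Fin l, lam (j * l + k) * ∫ ω, (Z (j * l + k) ω - q j ω k) ^ 2 ∂P
        ≤ ∑ k : Fin l, lam (j * l) * ∫ ω, (Z (j * l + k) ω - q j ω k) ^ 2 ∂P := by
          gcongr with k
          exact hlam_anti (Nat.le_add_right _ _)
      _ = lam (j * l) * quantErrStdGaussian l (nn j) ^ 2 := by rw [← Finset.mul_sum, hblock j]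
  · subst hl
    simp [herr, ← hblock]

/-- Lemma 1: for the block quantization `X̂ⁿ` of a centered Gaussian vector
`X = Σ_j √λ_j Z_j u_j` built from `L²`-optimal `n_j`-quantizers of `N(0,I_l)` on the
blocks `Z^{(j)} = (Z_{(j-1)l+1}, …, Z_{jl})`,
`E‖X - X̂ⁿ‖² ≤ Σ_{j=1}^m λ_{(j-1)l+1} e_{n_j}(N(0,I_l))² + Σ_{j ≥ ml+1} λ_j`,
with equality when `l = 1`. -/
theorem block_quantization_error_bound
    {H : Type*} [NormedAddCommGroup H] [InnerProductSpace ℝ H] [CompleteSpace H]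
    {Ω : Type*} [MeasurableSpace Ω] (P : Measure Ω) [IsProbabilityMeasure P]
    -- Karhunen–Loève data: `λ_1 ≥ λ_2 ≥ … > 0`, `u` orthonormal, `Z_j` i.i.d. `N(0,1)`
    (lam : ℕ → ℝ) (hlam_pos : ∀ j, 0 < lam j) (hlam_anti : Antitone lam)
    (hlam_sum : Summable lam)
    (u : ℕ → H) (hu : Orthonormal ℝ u)
    (Z : ℕ → Ω → ℝ) (hZmeas : ∀ j, Measurable (Z j))
    (hZlaw : ∀ j, Measure.map (Z j) P = gaussianReal 0 1)
    (hZindep : iIndepFun Z P)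
    -- `X = Σ_j λ_j^{1/2} Z_j u_j`
    (X : Ω → H)
    (hX : ∀ᵐ ω ∂P, HasSum (fun j => (Real.sqrt (lam j) * Z j ω) • u j) (X ω))
    -- block sizes and quantizer sizes, `∏_j n_j ≤ n`
    (n m l : ℕ) (hm : 1 ≤ m) (hl : 1 ≤ l)
    (nn : Fin m → ℕ) (hnn : ∀ j, 1 ≤ nn j) (hprod : ∏ j, nn j ≤ n)
    -- `α j` is an `L²`-optimal `n_j`-quantizer of `N(0,I_l)`
    (α : Fin m → Finset (Fin l → ℝ))
    (hcard : ∀ j, (α j).Nonempty ∧ (α j).card ≤ nn j)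
    (hopt : ∀ j,
      (∫ x, sInf ((fun a => ∑ i, (x i - a i) ^ 2) '' ((α j : Set (Fin l → ℝ))))
          ∂stdGaussianPi l) ^ (1/2 : ℝ) = quantErrStdGaussian l (nn j))
    -- `q j` is a Voronoi (nearest-neighbour) quantization of the block `Z^{(j)}` by `α j`
    (q : Fin m → Ω → Fin l → ℝ) (hqmeas : ∀ j, Measurable (q j))
    (hq : ∀ j ω, q j ω ∈ α j ∧
      (∑ i : Fin l, (Z ((j : ℕ) * l + (i : ℕ)) ω - q j ω i) ^ 2)
        = sInf ((fun a => ∑ i : Fin l, (Z ((j : ℕ) * l + (i : ℕ)) ω - a i) ^ 2) ''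
            ((α j : Set (Fin l → ℝ)))))
    -- the block quantization `X̂ⁿ`
    (Xhat : Ω → H)
    (hXhat : ∀ ω, Xhat ω = ∑ j : Fin m, ∑ k : Fin l,
        (Real.sqrt (lam ((j : ℕ) * l + (k : ℕ))) * q j ω k) • u ((j : ℕ) * l + (k : ℕ))) :
    (∫ ω, ‖X ω - Xhat ω‖ ^ 2 ∂P)
        ≤ (∑ j : Fin m, lam ((j : ℕ) * l) * quantErrStdGaussian l (nn j) ^ 2)
          + ∑' i : ℕ, lam (m * l + i)
    ∧ (l = 1 →
      (∫ ω, ‖X ω - Xhat ω‖ ^ 2 ∂P)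
        = (∑ j : Fin m, lam ((j : ℕ) * l) * quantErrStdGaussian l (nn j) ^ 2)
          + ∑' i : ℕ, lam (m * l + i)) :=
  block_quantization_error_bound_general P lam hlam_pos hlam_anti hlam_sum u hu Z hZmeas hZlaw
    hZindep X hX m l nn α hopt q hqmeas hq Xhat hXhat
end

section
/- Let l_0, l ∈ ℕ with l ≥ l_0, and write l = n l_0 + m with n ∈ ℕ and m ∈ {0, …, l_0 − 1}. Then for every k ∈ ℕ, e_k(N(0,I_l))² ≤ n · e_{⌊k^{l_0/l}⌋}(N(0,I_{l_0}))² + m · e_{⌊k^{1/l}⌋}(N(0,1))². -/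
open MeasureTheory ProbabilityTheory Filter Real
open scoped RealInnerProductSpace NNReal

instance (l : ℕ) : IsProbabilityMeasure (stdGaussianPi l) := by
  unfold stdGaussianPi; infer_instance

lemma measurePreserving_comp_injective {a l : ℕ} {ι : Fin a → Fin l}
    (hι : Function.Injective ι) :
    MeasurePreserving (fun x : Fin l → ℝ => x ∘ ι) (stdGaussianPi l) (stdGaussianPi a) := by
  classical
  have hmeas : Measurable fun x : Fin l → ℝ => x ∘ ι :=
    measurable_pi_lambda _ fun j => measurable_pi_apply (ι j)
  refine ⟨hmeas, ?_⟩
  refine (Measure.pi_eq fun s hs => ?_).symm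
  rw [Measure.map_apply hmeas (MeasurableSet.univ_pi hs)]
  set t : Fin l → Set ℝ := fun i => if h : ∃ j, ι j = i then s h.choose else Set.univ with ht
  have htj : ∀ j, t (ι j) = s j := by
    intro j
    have hex : ∃ j', ι j' = ι j := ⟨j, rfl⟩
    have : hex.choose = j := hι hex.choose_spec
    simp only [ht, dif_pos hex, this]
  have hpre : (fun x : Fin l → ℝ => x ∘ ι) ⁻¹' (Set.univ.pi s) = Set.univ.pi t := by
    ext x
    simp only [Set.mem_preimage, Set.mem_univ_pi, Function.comp]
    constructor
    · intro h i
      by_cases hi : ∃ j, ι j = i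
      · obtain ⟨j, rfl⟩ := hi
        rw [htj]; exact h j
      · simp only [ht, dif_neg hi]; trivial
    · intro h j
      have := h (ι j)
      rwa [htj] at this
  rw [hpre, stdGaussianPi, Measure.pi_pi]
  calc ∏ i : Fin l, gaussianReal 0 1 (t i)
      = ∏ i ∈ Finset.univ.image ι, gaussianReal 0 1 (t i) := by
        refine (Finset.prod_subset (Finset.subset_univ _) ?_).symm
        intro i _ hi
        have hi' : ¬ ∃ j, ι j = i := by simpa [Finset.mem_image] using hi
        simp [ht, dif_neg hi']
    _ = ∏ j : Fin a, gaussianReal 0 1 (t (ι j)) :=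
        Finset.prod_image fun j _ j' _ h => hι h
    _ = ∏ j : Fin a, gaussianReal 0 1 (s j) := Finset.prod_congr rfl fun j _ => by rw [htj]

lemma measurePreserving_eval_gauss {l : ℕ} (i : Fin l) :
    MeasurePreserving (fun x : Fin l → ℝ => x i) (stdGaussianPi l) (gaussianReal 0 1) := by
  have h1 := measurePreserving_comp_injective
    (ι := fun _ : Fin 1 => i) (Function.injective_of_subsingleton _)
  have h2 : MeasurePreserving (MeasurableEquiv.funUnique (Fin 1) ℝ)
      (stdGaussianPi 1) (gaussianReal 0 1) :=
    measurePreserving_funUnique _ _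
  exact h2.comp h1

lemma integrable_sq_gauss (c : ℝ) :
    Integrable (fun z : ℝ => (z - c) ^ 2) (gaussianReal 0 1) := by
  have hv : (1 : ℝ≥0) ≠ 0 := one_ne_zero
  rw [gaussianReal_of_var_ne_zero _ hv]
  rw [gaussianPDF_def]
  rw [integrable_withDensity_iff (measurable_gaussianPDFReal 0 1).ennreal_ofReal
    (Eventually.of_forall fun _ => ENNReal.ofReal_lt_top)]
  have hpdf : ∀ z : ℝ, (ENNReal.ofReal (gaussianPDFReal 0 1 z)).toReal
      = (Real.sqrt (2 * π))⁻¹ * Real.exp (-(1/2 : ℝ) * z ^ 2) := by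
    intro z
    rw [ENNReal.toReal_ofReal (gaussianPDFReal_nonneg 0 1 z), gaussianPDFReal]
    push_cast
    ring_nf
  have hint : Integrable (fun z : ℝ =>
      (2 * (z ^ (2:ℝ) * Real.exp (-(1/2 : ℝ) * z ^ 2)) + 2 * c ^ 2 * Real.exp (-(1/2 : ℝ) * z ^ 2))
        * (Real.sqrt (2 * π))⁻¹) := by
    refine Integrable.mul_const ?_ _
    exact ((integrable_rpow_mul_exp_neg_mul_sq (by norm_num) (by norm_num)).const_mul 2).add
      ((integrable_exp_neg_mul_sq (by norm_num)).const_mul _)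
  refine hint.mono' ?_ ?_
  · exact (((measurable_id.sub_const c).pow_const 2).mul
      ((measurable_gaussianPDFReal 0 1).ennreal_ofReal.ennreal_toReal)).aestronglyMeasurable
  · refine Eventually.of_forall fun z => ?_
    rw [hpdf z]
    have h1 : (z - c) ^ 2 ≤ 2 * z ^ 2 + 2 * c ^ 2 := by nlinarith [sq_nonneg (z + c)]
    have h2 : (0:ℝ) < Real.exp (-(1/2 : ℝ) * z ^ 2) := Real.exp_pos _
    have h3 : (0:ℝ) ≤ (Real.sqrt (2 * π))⁻¹ := by positivity
    rw [Real.norm_eq_abs, abs_of_nonneg (by positivity)]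
    have h4 : z ^ (2:ℝ) = z ^ (2:ℕ) := by
      rw [show (2:ℝ) = ((2:ℕ):ℝ) by norm_num, Real.rpow_natCast]
    rw [h4]
    calc (z - c) ^ 2 * ((Real.sqrt (2 * π))⁻¹ * Real.exp (-(1/2 : ℝ) * z ^ 2))
        ≤ (2 * z ^ 2 + 2 * c ^ 2) * ((Real.sqrt (2 * π))⁻¹ * Real.exp (-(1/2 : ℝ) * z ^ 2)) := by
          apply mul_le_mul_of_nonneg_right h1 (by positivity)
      _ = (2 * (z ^ 2 * Real.exp (-(1/2 : ℝ) * z ^ 2))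
            + 2 * c ^ 2 * Real.exp (-(1/2 : ℝ) * z ^ 2)) * (Real.sqrt (2 * π))⁻¹ := by ring

lemma integrable_sum_sq {l : ℕ} (a : Fin l → ℝ) :
    Integrable (fun y : Fin l → ℝ => ∑ i, (y i - a i) ^ 2) (stdGaussianPi l) := by
  refine integrable_finset_sum _ fun i _ => ?_
  have := ((measurePreserving_eval_gauss i).integrable_comp
    (((measurable_id.sub_const (a i)).pow_const 2).aestronglyMeasurable)).2
    (integrable_sq_gauss (a i))
  exact this

noncomputable def distor (l : ℕ) (α : Finset (Fin l → ℝ)) (x : Fin l → ℝ) : ℝ :=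
  sInf ((fun a => ∑ i, (x i - a i) ^ 2) '' (α : Set (Fin l → ℝ)))

lemma distor_nonneg {l : ℕ} {α : Finset (Fin l → ℝ)} (hα : α.Nonempty) (x : Fin l → ℝ) :
    0 ≤ distor l α x := by
  refine le_csInf (hα.to_set.image _) ?_
  rintro r ⟨a, _, rfl⟩
  positivity

lemma distor_le {l : ℕ} {α : Finset (Fin l → ℝ)} {a : Fin l → ℝ} (ha : a ∈ α)
    (x : Fin l → ℝ) : distor l α x ≤ ∑ i, (x i - a i) ^ 2 :=
  csInf_le ((α.finite_toSet.image _).bddBelow) ⟨a, ha, rfl⟩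

lemma distor_attained {l : ℕ} {α : Finset (Fin l → ℝ)} (hα : α.Nonempty) (x : Fin l → ℝ) :
    ∃ a ∈ α, distor l α x = ∑ i, (x i - a i) ^ 2 := by
  have := Set.Nonempty.csInf_mem (hα.to_set.image (fun a => ∑ i, (x i - a i) ^ 2))
    (α.finite_toSet.image _)
  obtain ⟨a, ha, h⟩ := this
  exact ⟨a, ha, h.symm⟩

lemma continuous_finset_inf' {ι X : Type*} [TopologicalSpace X] {s : Finset ι}
    (hs : s.Nonempty) {f : ι → X → ℝ} (hf : ∀ i, Continuous (f i)) :
    Continuous (fun x => s.inf' hs fun i => f i x) := by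
  induction hs using Finset.Nonempty.cons_induction with
  | singleton i => simpa using hf i
  | cons i s hi hs ih =>
      have : (fun x => (Finset.cons i s hi).inf' (Finset.cons_nonempty hi) fun j => f j x)
          = fun x => min (f i x) (s.inf' hs fun j => f j x) := by
        funext x
        rw [Finset.inf'_cons]
      rw [this]
      exact (hf i).min ih

lemma continuous_distor {l : ℕ} {α : Finset (Fin l → ℝ)} (hα : α.Nonempty) :
    Continuous (distor l α) := by
  have h : distor l α = fun x => α.inf' hα fun a => ∑ i, (x i - a i) ^ 2 := by
    funext x
    rw [distor, Finset.inf'_eq_csInf_image]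
  rw [h]
  exact continuous_finset_inf' hα fun a =>
    continuous_finset_sum _ fun i _ => ((continuous_apply i).sub continuous_const).pow 2

lemma integrable_distor {l : ℕ} {α : Finset (Fin l → ℝ)} (hα : α.Nonempty) :
    Integrable (distor l α) (stdGaussianPi l) := by
  obtain ⟨a, ha⟩ := id hα
  refine (integrable_sum_sq a).mono' (continuous_distor hα).aestronglyMeasurable ?_
  refine Eventually.of_forall fun y => ?_
  rw [Real.norm_eq_abs, abs_of_nonneg (distor_nonneg hα y)]
  exact distor_le ha y

def errSet (l k : ℕ) : Set ℝ :=
  { r : ℝ | ∃ α : Finset (Fin l → ℝ), α.Nonempty ∧ α.card ≤ k ∧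
    r = ∫ x, distor l α x ∂stdGaussianPi l }

lemma errSet_nonneg {l k : ℕ} {r : ℝ} (hr : r ∈ errSet l k) : 0 ≤ r := by
  obtain ⟨α, hα, -, rfl⟩ := hr
  exact integral_nonneg fun x => distor_nonneg hα x

lemma errSet_bddBelow (l k : ℕ) : BddBelow (errSet l k) :=
  ⟨0, fun r hr => errSet_nonneg hr⟩

lemma errSet_nonempty (l k : ℕ) (hk : 1 ≤ k) : (errSet l k).Nonempty := by
  refine ⟨_, {0}, Finset.singleton_nonempty _, by simpa using hk, rfl⟩

lemma sInf_errSet_nonneg (l k : ℕ) (hk : 1 ≤ k) : 0 ≤ sInf (errSet l k) :=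
  le_csInf (errSet_nonempty l k hk) fun r hr => errSet_nonneg hr

lemma quantErr_sq_eq (l k : ℕ) (hk : 1 ≤ k) :
    quantErrStdGaussian l k ^ 2 = sInf (errSet l k) := by
  have hset : { r : ℝ | ∃ α : Finset (Fin l → ℝ), α.Nonempty ∧ α.card ≤ k ∧
      r = (∫ x, sInf ((fun a => ∑ i, (x i - a i) ^ 2) '' (α : Set (Fin l → ℝ)))
          ∂stdGaussianPi l) ^ (1/2 : ℝ) } = Real.sqrt '' errSet l k := by
    ext r
    constructor
    · rintro ⟨α, h1, h2, rfl⟩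
      exact ⟨_, ⟨α, h1, h2, rfl⟩, (Real.sqrt_eq_rpow _).symm ▸ rfl⟩
    · rintro ⟨s, ⟨α, h1, h2, rfl⟩, rfl⟩
      exact ⟨α, h1, h2, (Real.sqrt_eq_rpow _)⟩
  have hmap : Real.sqrt (sInf (errSet l k)) = sInf (Real.sqrt '' errSet l k) :=
    Monotone.map_csInf_of_continuousAt (Real.continuous_sqrt.continuousAt)
      (fun _ _ h => Real.sqrt_le_sqrt h) (errSet_nonempty l k hk) (errSet_bddBelow l k)
  rw [quantErrStdGaussian, hset, ← hmap, Real.sq_sqrt (sInf_errSet_nonneg l k hk)]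

lemma sInf_const_mul {c : ℝ} (hc : 0 ≤ c) {A : Set ℝ} (hA : A.Nonempty) (hAb : BddBelow A) :
    sInf ((fun t => c * t) '' A) = c * sInf A :=
  (Monotone.map_csInf_of_continuousAt ((continuous_const.mul continuous_id).continuousAt)
    (monotone_mul_left_of_nonneg hc) hA hAb).symm

lemma le_csInf_add_csInf {A B : Set ℝ} (hA : A.Nonempty) (hB : B.Nonempty) {a : ℝ}
    (h : ∀ x ∈ A, ∀ y ∈ B, a ≤ x + y) : a ≤ sInf A + sInf B := by
  rw [← sub_le_iff_le_add]
  refine le_csInf hA fun x hx => ?_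
  rw [sub_le_comm]
  refine le_csInf hB fun y hy => ?_
  rw [sub_le_iff_le_add']
  exact h x hx y hy

lemma errSet_mono {l k k' : ℕ} (h : k ≤ k') : errSet l k ⊆ errSet l k' := by
  rintro r ⟨α, h1, h2, rfl⟩
  exact ⟨α, h1, h2.trans h, rfl⟩

lemma block_estimate {l₀ l n m k₀ k₁ : ℕ} (hl : l = n * l₀ + m)
    {α₀ : Finset (Fin l₀ → ℝ)} (hα₀ : α₀.Nonempty) (h₀ : α₀.card ≤ k₀)
    {α₁ : Finset (Fin 1 → ℝ)} (hα₁ : α₁.Nonempty) (h₁ : α₁.card ≤ k₁) :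
    ∃ D ∈ errSet l (k₀ ^ n * k₁ ^ m),
      D ≤ (n : ℝ) * (∫ y, distor l₀ α₀ y ∂stdGaussianPi l₀)
          + (m : ℝ) * (∫ y, distor 1 α₁ y ∂stdGaussianPi 1) := by
  classical
  set ψ : (Fin n × Fin l₀) ⊕ Fin m ≃ Fin l :=
    ((Equiv.sumCongr finProdFinEquiv (Equiv.refl (Fin m))).trans finSumFinEquiv).trans
      (finCongr hl.symm) with hψ
  set blockι : Fin n → Fin l₀ → Fin l := fun j i₀ => ψ (Sum.inl (j, i₀)) with hbl
  set tailι : Fin m → Fin l := fun j => ψ (Sum.inr j) with htl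
  set glue : ((Fin n → (Fin l₀ → ℝ)) × (Fin m → (Fin 1 → ℝ))) → (Fin l → ℝ) :=
    fun fg i => Sum.elim (fun p => fg.1 p.1 p.2) (fun j => fg.2 j 0) (ψ.symm i) with hglue
  set α : Finset (Fin l → ℝ) :=
    Finset.image glue ((Fintype.piFinset fun _ : Fin n => α₀) ×ˢ
      (Fintype.piFinset fun _ : Fin m => α₁)) with hα
  have hαne : α.Nonempty :=
    Finset.Nonempty.image
      ((Fintype.piFinset_nonempty.2 fun _ => hα₀).product
        (Fintype.piFinset_nonempty.2 fun _ => hα₁)) _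
  have hcard : α.card ≤ k₀ ^ n * k₁ ^ m := by
    refine Finset.card_image_le.trans ?_
    rw [Finset.card_product, Fintype.card_piFinset, Fintype.card_piFinset]
    simp only [Finset.prod_const, Finset.card_univ, Fintype.card_fin]
    exact Nat.mul_le_mul (Nat.pow_le_pow_left h₀ n) (Nat.pow_le_pow_left h₁ m)
  have hblockinj : ∀ j : Fin n, Function.Injective (blockι j) := by
    intro j a b h
    simpa using ψ.injective h
  have htailinj : ∀ j : Fin m, Function.Injective (fun _ : Fin 1 => tailι j) :=
    fun j => Function.injective_of_subsingleton _
  -- pointwise bound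
  have hpt : ∀ x : Fin l → ℝ, distor l α x ≤
      (∑ j : Fin n, distor l₀ α₀ (x ∘ blockι j))
        + ∑ j : Fin m, distor 1 α₁ (x ∘ fun _ : Fin 1 => tailι j) := by
    intro x
    choose f hf hfeq using fun j : Fin n => distor_attained hα₀ (x ∘ blockι j)
    choose g hg hgeq using fun j : Fin m =>
      distor_attained hα₁ (x ∘ fun _ : Fin 1 => tailι j)
    have hmem : glue (f, g) ∈ α := by
      rw [hα]
      refine Finset.mem_image_of_mem _ ?_
      rw [Finset.mem_product]
      exact ⟨Fintype.mem_piFinset.2 hf, Fintype.mem_piFinset.2 hg⟩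
    refine (distor_le hmem x).trans_eq ?_
    rw [← Equiv.sum_comp ψ (fun i => (x i - glue (f, g) i) ^ 2), Fintype.sum_sum_type,
      Fintype.sum_prod_type]
    congr 1
    · refine Finset.sum_congr rfl fun j _ => ?_
      rw [hfeq j]
      refine Finset.sum_congr rfl fun i₀ _ => ?_
      have h1 : glue (f, g) (ψ (Sum.inl (j, i₀))) = f j i₀ := by
        simp [hglue]
      rw [h1]
      rfl
    · refine Finset.sum_congr rfl fun j _ => ?_
      rw [hgeq j, Fin.sum_univ_one]
      have h1 : glue (f, g) (ψ (Sum.inr j)) = g j 0 := by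
        simp [hglue]
      rw [h1]
      rfl
  -- integrability of the comparison function
  have hintb : ∀ j : Fin n,
      Integrable (fun x : Fin l → ℝ => distor l₀ α₀ (x ∘ blockι j)) (stdGaussianPi l) :=
    fun j => ((measurePreserving_comp_injective (hblockinj j)).integrable_comp
      (continuous_distor hα₀).aestronglyMeasurable).2 (integrable_distor hα₀)
  have hintt : ∀ j : Fin m,
      Integrable (fun x : Fin l → ℝ => distor 1 α₁ (x ∘ fun _ : Fin 1 => tailι j))
        (stdGaussianPi l) :=
    fun j => ((measurePreserving_comp_injective (htailinj j)).integrable_comp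
      (continuous_distor hα₁).aestronglyMeasurable).2 (integrable_distor hα₁)
  have hint : Integrable (fun x : Fin l → ℝ =>
      (∑ j : Fin n, distor l₀ α₀ (x ∘ blockι j))
        + ∑ j : Fin m, distor 1 α₁ (x ∘ fun _ : Fin 1 => tailι j)) (stdGaussianPi l) :=
    (integrable_finset_sum _ fun j _ => hintb j).add (integrable_finset_sum _ fun j _ => hintt j)
  -- integral identities
  have hIb : ∀ j : Fin n, ∫ x, distor l₀ α₀ (x ∘ blockι j) ∂stdGaussianPi l
      = ∫ y, distor l₀ α₀ y ∂stdGaussianPi l₀ := by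
    intro j
    have hmp := measurePreserving_comp_injective (hblockinj j)
    rw [← integral_map hmp.measurable.aemeasurable
      (continuous_distor hα₀).aestronglyMeasurable, hmp.map_eq]
  have hIt : ∀ j : Fin m, ∫ x, distor 1 α₁ (x ∘ fun _ : Fin 1 => tailι j) ∂stdGaussianPi l
      = ∫ y, distor 1 α₁ y ∂stdGaussianPi 1 := by
    intro j
    have hmp := measurePreserving_comp_injective (htailinj j)
    rw [← integral_map hmp.measurable.aemeasurable
      (continuous_distor hα₁).aestronglyMeasurable, hmp.map_eq]
  refine ⟨∫ x, distor l α x ∂stdGaussianPi l, ⟨α, hαne, hcard, rfl⟩, ?_⟩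
  calc ∫ x, distor l α x ∂stdGaussianPi l
      ≤ ∫ x, ((∑ j : Fin n, distor l₀ α₀ (x ∘ blockι j))
          + ∑ j : Fin m, distor 1 α₁ (x ∘ fun _ : Fin 1 => tailι j)) ∂stdGaussianPi l :=
        integral_mono_of_nonneg (Eventually.of_forall fun x => distor_nonneg hαne x) hint
          (Eventually.of_forall hpt)
    _ = (n : ℝ) * (∫ y, distor l₀ α₀ y ∂stdGaussianPi l₀)
          + (m : ℝ) * (∫ y, distor 1 α₁ y ∂stdGaussianPi 1) := by
        rw [integral_add (integrable_finset_sum _ fun j _ => hintb j)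
          (integrable_finset_sum _ fun j _ => hintt j),
          integral_finset_sum _ fun j _ => hintb j,
          integral_finset_sum _ fun j _ => hintt j]
        simp only [hIb, hIt, Finset.sum_const, Finset.card_univ, Fintype.card_fin,
          nsmul_eq_mul]

/-- Block-quantizer estimate: if `l = n l₀ + m` with `m ∈ {0, …, l₀ - 1}`, then for every
`k ≥ 1`,
`e_k(N(0,I_l))² ≤ n e_{⌊k^{l₀/l}⌋}(N(0,I_{l₀}))² + m e_{⌊k^{1/l}⌋}(N(0,1))²`. -/
theorem gaussian_block_quantizer_estimate
    (l₀ l n m : ℕ) (hl₀ : 1 ≤ l₀) (hn : 1 ≤ n) (hm : m < l₀)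
    (hl : l = n * l₀ + m) (k : ℕ) (hk : 1 ≤ k) :
    quantErrStdGaussian l k ^ 2
      ≤ (n : ℝ) * quantErrStdGaussian l₀ ⌊(k : ℝ) ^ ((l₀ : ℝ)/(l : ℝ))⌋₊ ^ 2
        + (m : ℝ) * quantErrStdGaussian 1 ⌊(k : ℝ) ^ ((1 : ℝ)/(l : ℝ))⌋₊ ^ 2 := by
  set k₀ := ⌊(k : ℝ) ^ ((l₀ : ℝ)/(l : ℝ))⌋₊ with hk₀def
  set k₁ := ⌊(k : ℝ) ^ ((1 : ℝ)/(l : ℝ))⌋₊ with hk₁def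
  have hlpos : 0 < l := by
    have h := Nat.mul_le_mul hn hl₀
    omega
  have hlR : (0 : ℝ) < (l : ℝ) := by exact_mod_cast hlpos
  have hkR : (1 : ℝ) ≤ (k : ℝ) := by exact_mod_cast hk
  have hone : ∀ y : ℝ, 0 ≤ y → (1 : ℝ) ≤ (k : ℝ) ^ y := by
    intro y hy
    have := Real.rpow_le_rpow_of_exponent_le hkR hy
    simpa [Real.rpow_zero] using this
  have hk₀ : 1 ≤ k₀ := by
    rw [hk₀def]
    exact_mod_cast Nat.le_floor (by simpa using hone _ (by positivity))
  have hk₁ : 1 ≤ k₁ := by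
    rw [hk₁def]
    exact_mod_cast Nat.le_floor (by simpa using hone _ (by positivity))
  have hkk : k₀ ^ n * k₁ ^ m ≤ k := by
    have hb₀ : (0 : ℝ) ≤ (k : ℝ) ^ ((l₀ : ℝ)/(l : ℝ)) := by positivity
    have hb₁ : (0 : ℝ) ≤ (k : ℝ) ^ ((1 : ℝ)/(l : ℝ)) := by positivity
    have h1 : (k₀ : ℝ) ≤ (k : ℝ) ^ ((l₀ : ℝ)/(l : ℝ)) := Nat.floor_le hb₀
    have h2 : (k₁ : ℝ) ≤ (k : ℝ) ^ ((1 : ℝ)/(l : ℝ)) := Nat.floor_le hb₁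
    have hcast : ((k₀ ^ n * k₁ ^ m : ℕ) : ℝ) ≤ (k : ℝ) := by
      push_cast
      have hk0R : (0 : ℝ) ≤ (k : ℝ) := by positivity
      have hkposR : (0 : ℝ) < (k : ℝ) := by positivity
      calc (k₀ : ℝ) ^ n * (k₁ : ℝ) ^ m
          ≤ ((k : ℝ) ^ ((l₀ : ℝ)/(l : ℝ))) ^ n * ((k : ℝ) ^ ((1 : ℝ)/(l : ℝ))) ^ m := by
            refine mul_le_mul (pow_le_pow_left₀ (by positivity) h1 n)
              (pow_le_pow_left₀ (by positivity) h2 m) (by positivity) (by positivity)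
        _ = (k : ℝ) ^ ((l₀ : ℝ)/(l : ℝ) * n + (1 : ℝ)/(l : ℝ) * m) := by
            rw [← Real.rpow_natCast ((k : ℝ) ^ ((l₀ : ℝ)/(l : ℝ))) n,
              ← Real.rpow_natCast ((k : ℝ) ^ ((1 : ℝ)/(l : ℝ))) m,
              ← Real.rpow_mul hk0R, ← Real.rpow_mul hk0R, ← Real.rpow_add hkposR]
        _ = (k : ℝ) ^ (1 : ℝ) := by
            congr 1
            have hlcast : (l : ℝ) = (n : ℝ) * (l₀ : ℝ) + (m : ℝ) := by
              exact_mod_cast congrArg (Nat.cast : ℕ → ℝ) hl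
            field_simp
            linarith [hlcast]
        _ = (k : ℝ) := Real.rpow_one _
    exact_mod_cast hcast
  rw [quantErr_sq_eq l k hk, quantErr_sq_eq l₀ k₀ hk₀, quantErr_sq_eq 1 k₁ hk₁]
  rw [← sInf_const_mul (by positivity : (0:ℝ) ≤ (n:ℝ)) (errSet_nonempty l₀ k₀ hk₀)
      (errSet_bddBelow l₀ k₀),
    ← sInf_const_mul (by positivity : (0:ℝ) ≤ (m:ℝ)) (errSet_nonempty 1 k₁ hk₁)
      (errSet_bddBelow 1 k₁)]
  refine le_csInf_add_csInf ((errSet_nonempty l₀ k₀ hk₀).image _)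
    ((errSet_nonempty 1 k₁ hk₁).image _) ?_
  rintro x ⟨I₀, ⟨α₀, hα₀, h₀, rfl⟩, rfl⟩ y ⟨I₁, ⟨α₁, hα₁, h₁, rfl⟩, rfl⟩
  obtain ⟨D, hD, hDle⟩ := block_estimate hl hα₀ h₀ hα₁ h₁
  exact (csInf_le (errSet_bddBelow l k) (errSet_mono hkk hD)).trans hDle
end

section
/- Let λ_1 ≥ λ_2 ≥ … > 0, let n, m, l ∈ ℕ, and set n_j := ⌊n^{1/m} λ_{(j−1)l+1}^{l/2} (∏_{i=1}^m λ_{(i−1)l+1})^{−l/(2m)}⌋ for j = 1, …, m. Assume n^{1/m} λ_{(m−1)l+1}^{l/2} (∏_{i=1}^m λ_{(i−1)l+1})^{−l/(2m)} ≥ 1 (so that n_j ≥ 1 for all j ≤ m). Then Σ_{j=1}^m λ_{(j−1)l+1} n_j^{−2/l} ≤ 4^{1/l} · m · n^{−2/(ml)} · (∏_{j=1}^m λ_{(j−1)l+1})^{1/m} ≤ 4^{1/l} · m · λ_{(m−1)l+1}. -/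
open Finset Real

/-!
Write `x_j = c λ_j^{l/2}` with `c = n^{1/m} (∏ λ_i)^{-l/(2m)}`, so that `λ_j x_j^{-2/l} = c^{-2/l}`
does not depend on `j`, and `c^{-2/l} = n^{-2/(ml)} (∏ λ_i)^{1/m}`. Since every `x_j ≥ 1`,
`⌊x_j⌋ > x_j / 2`, which costs at most the factor `2^{2/l} = 4^{1/l}` in each summand.
The second inequality is `x_m^{-2/l} ≤ 1`.
-/

lemma Real.natFloor_rpow_neg_le {x p : ℝ} (hx : 1 ≤ x) (hp : 0 ≤ p) :
    (⌊x⌋₊ : ℝ) ^ (-p) ≤ 2 ^ p * x ^ (-p) := by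
  have hx2 : 0 < x / 2 := by linarith
  calc (⌊x⌋₊ : ℝ) ^ (-p) ≤ (x / 2) ^ (-p) :=
        rpow_le_rpow_of_nonpos hx2 (Nat.div_two_lt_floor hx).le (neg_nonpos.2 hp)
    _ = 2 ^ p * x ^ (-p) := by
        rw [div_rpow (by linarith) zero_le_two, rpow_neg zero_le_two, div_inv_eq_mul, mul_comm]

lemma Real.mul_rpow_half_rpow_neg_two_div {c L l : ℝ} (hc : 0 ≤ c) (hL : 0 < L) (hl : l ≠ 0) :
    (c * L ^ (l / 2)) ^ (-2 / l) = c ^ (-2 / l) / L := by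
  rw [mul_rpow hc (by positivity), ← rpow_mul hL.le,
    show l / 2 * (-2 / l) = -1 by field_simp, rpow_neg_one, ← div_eq_mul_inv]

lemma Real.mul_natFloor_mul_rpow_le {c L l : ℝ} (hc : 0 ≤ c) (hL : 0 < L) (hl : 0 < l)
    (h1 : 1 ≤ c * L ^ (l / 2)) :
    L * (⌊c * L ^ (l / 2)⌋₊ : ℝ) ^ (-2 / l) ≤ 4 ^ (1 / l) * c ^ (-2 / l) := by
  have h4 : (4 : ℝ) ^ (1 / l) = 2 ^ (2 / l) := by
    rw [show (4 : ℝ) = 2 ^ (2 : ℝ) by norm_num, ← rpow_mul zero_le_two, mul_one_div]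
  calc L * (⌊c * L ^ (l / 2)⌋₊ : ℝ) ^ (-2 / l)
      ≤ L * (2 ^ (2 / l) * (c * L ^ (l / 2)) ^ (-(2 / l))) := by
        rw [neg_div]
        exact mul_le_mul_of_nonneg_left (natFloor_rpow_neg_le h1 (by positivity)) hL.le
    _ = 4 ^ (1 / l) * c ^ (-2 / l) := by
        rw [← neg_div, mul_rpow_half_rpow_neg_two_div hc hL hl.ne', h4]
        field_simp

lemma Real.rpow_neg_two_div_le_of_one_le_mul_rpow {c L l : ℝ} (hc : 0 ≤ c) (hL : 0 < L)
    (hl : 0 < l) (h1 : 1 ≤ c * L ^ (l / 2)) : c ^ (-2 / l) ≤ L := by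
  have h := rpow_le_one_of_one_le_of_nonpos h1
    (div_nonpos_of_nonpos_of_nonneg (by norm_num : (-2 : ℝ) ≤ 0) hl.le)
  rwa [mul_rpow_half_rpow_neg_two_div hc hL hl.ne', div_le_one hL] at h

theorem optimal_allocation_estimate_general
    (lam : ℕ → ℝ) (hlam_pos : ∀ j, 0 < lam j) (hlam_anti : Antitone lam)
    (n m l : ℕ) (hl : 1 ≤ l)
    (nj : ℕ → ℕ)
    (hnj : ∀ j : ℕ, nj j = ⌊(n : ℝ) ^ ((1 : ℝ)/m) * lam (j * l) ^ ((l : ℝ)/2) *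
      (∏ i ∈ Finset.range m, lam (i * l)) ^ (-((l : ℝ)/(2 * m)))⌋₊)
    (hge1 : 1 ≤ (n : ℝ) ^ ((1 : ℝ)/m) * lam ((m - 1) * l) ^ ((l : ℝ)/2) *
      (∏ i ∈ Finset.range m, lam (i * l)) ^ (-((l : ℝ)/(2 * m)))) :
    (∑ j ∈ Finset.range m, lam (j * l) * (nj j : ℝ) ^ (-(2 : ℝ)/l))
        ≤ (4 : ℝ) ^ ((1 : ℝ)/l) * m * (n : ℝ) ^ (-(2 : ℝ)/(m * l)) *
            (∏ j ∈ Finset.range m, lam (j * l)) ^ ((1 : ℝ)/m)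
    ∧ (4 : ℝ) ^ ((1 : ℝ)/l) * m * (n : ℝ) ^ (-(2 : ℝ)/(m * l)) *
          (∏ j ∈ Finset.range m, lam (j * l)) ^ ((1 : ℝ)/m)
        ≤ (4 : ℝ) ^ ((1 : ℝ)/l) * m * lam ((m - 1) * l) := by
  have hl0 : (0 : ℝ) < l := by exact_mod_cast hl
  set P := ∏ i ∈ range m, lam (i * l)
  have hP : 0 < P := prod_pos fun i _ => hlam_pos _
  set c := (n : ℝ) ^ ((1 : ℝ) / m) * P ^ (-((l : ℝ) / (2 * m)))
  have hc : 0 ≤ c := by positivity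
  have hc_rpow : c ^ (-(2 : ℝ) / l) = (n : ℝ) ^ (-(2 : ℝ) / (m * l)) * P ^ ((1 : ℝ) / m) := by
    rw [mul_rpow (by positivity) (by positivity), ← rpow_mul (Nat.cast_nonneg n), ← rpow_mul hP.le]
    congr 2 <;> field_simp
  have hx : ∀ j, (n : ℝ) ^ ((1 : ℝ) / m) * lam (j * l) ^ ((l : ℝ) / 2) *
      P ^ (-((l : ℝ) / (2 * m))) = c * lam (j * l) ^ ((l : ℝ) / 2) := fun j => by ring
  rw [hx] at hge1
  have hone : ∀ j < m, 1 ≤ c * lam (j * l) ^ ((l : ℝ) / 2) := fun j hj =>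
    hge1.trans <| mul_le_mul_of_nonneg_left (rpow_le_rpow (hlam_pos _).le
      (hlam_anti (Nat.mul_le_mul_right l (by omega))) (by positivity)) hc
  refine ⟨?_, ?_⟩
  · calc ∑ j ∈ range m, lam (j * l) * (nj j : ℝ) ^ (-(2 : ℝ) / l)
        ≤ ∑ _j ∈ range m, (4 : ℝ) ^ ((1 : ℝ) / l) * c ^ (-(2 : ℝ) / l) := by
          refine sum_le_sum fun j hj => ?_
          rw [hnj, hx]
          exact mul_natFloor_mul_rpow_le hc (hlam_pos _) hl0 (hone j (mem_range.1 hj))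
      _ = _ := by rw [sum_const, card_range, nsmul_eq_mul, hc_rpow]; ring
  · rw [mul_assoc _ (_ ^ _), ← hc_rpow]
    exact mul_le_mul_of_nonneg_left
      (rpow_neg_two_div_le_of_one_le_mul_rpow hc (hlam_pos _) hl0 hge1) (by positivity)

/-- The allocation estimate: with
`n_j = ⌊n^{1/m} λ_{(j-1)l+1}^{l/2} (∏_{i=1}^m λ_{(i-1)l+1})^{-l/(2m)}⌋` (all `≥ 1`),
`Σ_{j=1}^m λ_{(j-1)l+1} n_j^{-2/l} ≤ 4^{1/l} m n^{-2/(ml)} (∏_{j=1}^m λ_{(j-1)l+1})^{1/m}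
≤ 4^{1/l} m λ_{(m-1)l+1}`. -/
theorem optimal_allocation_estimate
    (lam : ℕ → ℝ) (hlam_pos : ∀ j, 0 < lam j) (hlam_anti : Antitone lam)
    (n m l : ℕ) (hn : 1 ≤ n) (hm : 1 ≤ m) (hl : 1 ≤ l)
    (nj : ℕ → ℕ)
    (hnj : ∀ j : ℕ, nj j = ⌊(n : ℝ) ^ ((1 : ℝ)/m) * lam (j * l) ^ ((l : ℝ)/2) *
      (∏ i ∈ Finset.range m, lam (i * l)) ^ (-((l : ℝ)/(2 * m)))⌋₊)
    (hge1 : 1 ≤ (n : ℝ) ^ ((1 : ℝ)/m) * lam ((m - 1) * l) ^ ((l : ℝ)/2) *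
      (∏ i ∈ Finset.range m, lam (i * l)) ^ (-((l : ℝ)/(2 * m)))) :
    (∑ j ∈ Finset.range m, lam (j * l) * (nj j : ℝ) ^ (-(2 : ℝ)/l))
        ≤ (4 : ℝ) ^ ((1 : ℝ)/l) * m * (n : ℝ) ^ (-(2 : ℝ)/(m * l)) *
            (∏ j ∈ Finset.range m, lam (j * l)) ^ ((1 : ℝ)/m)
    ∧ (4 : ℝ) ^ ((1 : ℝ)/l) * m * (n : ℝ) ^ (-(2 : ℝ)/(m * l)) *
          (∏ j ∈ Finset.range m, lam (j * l)) ^ ((1 : ℝ)/m)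
        ≤ (4 : ℝ) ^ ((1 : ℝ)/l) * m * lam ((m - 1) * l) :=
  optimal_allocation_estimate_general lam hlam_pos hlam_anti n m l hl nj hnj hge1
end
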